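/- arXiv:1803.05953 — 2 statements merged into one kernel-verified Lean document; each statement's English description precedes it below -/
import Mathlib

section
/- For positive integer p2, nonnegative integer p1 and nonnegative integer l: S(p1+p2, l) = Σ_{k=1}^{p2−1} (−1)^{p2+1+k} s(p2,k) S(p1+k, l) + Σ_{j=0}^{p1} C(p1,j) p2^{p1−j} S(j, l−p2), where s are unsigned Stirling numbers of the first kind and S Stirling numbers of the second kind (with S(j,m)=0 for m<0). -/
open Finset

/-- Stirling numbers of the second kind. -/
def stirling2 : ℕ → ℕ → ℕ
  | 0, 0 => 1
  | 0, _ + 1 => 0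
  | _ + 1, 0 => 0
  | p + 1, k + 1 => stirling2 p k + (k + 1) * stirling2 p (k + 1)

/-- Unsigned Stirling numbers of the first kind. -/
def stirling1 : ℕ → ℕ → ℕ
  | 0, 0 => 1
  | 0, _ + 1 => 0
  | _ + 1, 0 => 0
  | p + 1, k + 1 => stirling1 p k + p * stirling1 p (k + 1)

/-- Stirling numbers of the second kind with integer second argument (0 when negative). -/
def stirling2Z (p : ℕ) (k : ℤ) : ℤ :=
  if k < 0 then 0 else stirling2 p k.toNat

/-- Generalized Stirling number of the second kind
`S_{a1,b1}^{a2,b2,p2}(p1,k)`. -/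
noncomputable def gsn (a1 b1 a2 b2 : ℂ) (p1 p2 k : ℕ) : ℂ :=
  (1 / (k.factorial : ℂ)) * ∑ j ∈ range (k + 1),
    (-1) ^ j * (k.choose j : ℂ) * (a1 * ((k : ℂ) - j) + b1) ^ p1 *
      (a2 * ((k : ℂ) - j) + b2) ^ p2

/-- Generalized Stirling number with integer index (0 when negative). -/
noncomputable def gsnZ (a1 b1 a2 b2 : ℂ) (p1 p2 : ℕ) (k : ℤ) : ℂ :=
  if k < 0 then 0 else gsn a1 b1 a2 b2 p1 p2 k.toNat

/-!
Work in `ℤ[X]` with its basis of falling factorials `(X)ₙ = X (X - 1) ⋯ (X - n + 1)`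
(`descPochhammer`). The Stirling numbers are change-of-basis coefficients:
`X ^ n = ∑ₖ S(n, k) (X)ₖ` and `(X)ₚ = ∑ₖ (-1) ^ (p + k) s(p, k) X ^ k`. Expand `X ^ p₁ * (X)_{p₂}`
in two ways: through the second formula, giving `∑ₖ (-1) ^ (p₂ + k) s(p₂, k) X ^ (p₁ + k)`, and
through `X ^ p₁ = ((X - p₂) + p₂) ^ p₁` together with `(X)_{p₂} * (X - p₂)ₘ = (X)_{p₂ + m}`.
Comparing the coefficients of `(X)ₗ` gives the identity with `k` running over `0, …, p₂`; its
terms `k = 0` and `k = p₂` are `0` and `S(p₁ + p₂, l)`.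
-/

open Polynomial

theorem stirling1_eq_stirlingFirst : stirling1 = Nat.stirlingFirst := by
  ext n k
  induction n generalizing k with
  | zero => cases k <;> rfl
  | succ n ih =>
    cases k with
    | zero => rfl
    | succ k => rw [stirling1, Nat.stirlingFirst_succ_succ, ih, ih, add_comm]

theorem stirling2_eq_stirlingSecond : stirling2 = Nat.stirlingSecond := by
  ext n k
  induction n generalizing k with
  | zero => cases k <;> rfl
  | succ n ih =>
    cases k with
    | zero => rfl
    | succ k => rw [stirling2, Nat.stirlingSecond_succ_succ, ih, ih, add_comm]

theorem stirling2Z_sub (j l p : ℕ) :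
    stirling2Z j ((l : ℤ) - p) = if p ≤ l then (Nat.stirlingSecond j (l - p) : ℤ) else 0 := by
  rw [stirling2Z, stirling2_eq_stirlingSecond]
  by_cases h : p ≤ l
  · rw [if_neg (by omega), if_pos h, ← Nat.cast_sub h, Int.toNat_natCast]
  · rw [if_pos (by omega), if_neg h]

theorem Polynomial.coeff_descPochhammer (R : Type*) [Ring R] (n k : ℕ) :
    (descPochhammer R n).coeff k = (-1) ^ (n + k) * Nat.stirlingFirst n k := by
  induction n generalizing k with
  | zero => cases k <;> simp [coeff_one]
  | succ n ih =>
    cases k with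
    | zero =>
      simp [coeff_zero_eq_eval_zero, descPochhammer_ne_zero_eval_zero]
    | succ k =>
      -- `R` need not be commutative, so the sign bookkeeping is done in `ℤ`
      have step : (-1 : ℤ) ^ (n + k) * n.stirlingFirst k
            - (-1) ^ (n + (k + 1)) * n.stirlingFirst (k + 1) * n
          = (-1) ^ (n + 1 + (k + 1)) * (n + 1).stirlingFirst (k + 1) := by
        rw [Nat.stirlingFirst_succ_succ]
        push_cast
        ring
      rw [descPochhammer_succ_right, ← C_eq_natCast, coeff_mul_X_sub_C, ih, ih]
      exact_mod_cast congrArg (Int.cast : ℤ → R) step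

theorem Polynomial.X_mul_descPochhammer (R : Type*) [Ring R] (k : ℕ) :
    X * descPochhammer R k = descPochhammer R (k + 1) + k • descPochhammer R k := by
  rw [descPochhammer_succ_right, mul_sub, X_mul, nsmul_eq_mul, Nat.cast_comm, sub_add_cancel]

theorem Polynomial.X_pow_eq_sum_stirlingSecond_smul_descPochhammer (R : Type*) [Ring R] (n : ℕ) :
    (X : R[X]) ^ n = ∑ k ∈ range (n + 1), n.stirlingSecond k • descPochhammer R k := by
  induction n with
  | zero => simp
  | succ n ih =>
    set D := descPochhammer R
    have shift_up : ∑ k ∈ range (n + 1), (k * n.stirlingSecond k) • D k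
        = ∑ k ∈ range (n + 1), ((k + 1) * n.stirlingSecond (k + 1)) • D (k + 1) := by
      rw [sum_range_succ', sum_range_succ, Nat.stirlingSecond_eq_zero_of_lt n.lt_succ_self]
      simp
    calc X ^ (n + 1) = ∑ k ∈ range (n + 1), n.stirlingSecond k • (X * D k) := by
          rw [pow_succ', ih, mul_sum]
          simp only [mul_smul_comm]
      _ = ∑ k ∈ range (n + 1),
            (n.stirlingSecond k • D (k + 1) + (k * n.stirlingSecond k) • D k) := by
          refine sum_congr rfl fun k _ => ?_
          rw [X_mul_descPochhammer, smul_add, mul_smul, smul_comm k]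
      _ = ∑ k ∈ range (n + 2), (n + 1).stirlingSecond k • D k := by
          rw [sum_add_distrib, shift_up, ← sum_add_distrib, sum_range_succ' _ (n + 1)]
          simp [Nat.stirlingSecond_succ_succ, add_smul, add_comm]

section Basis

variable (R : Type*) [CommRing R] [IsDomain R]

noncomputable def Polynomial.descPochhammerSequence : Polynomial.Sequence R where
  elems' := descPochhammer R
  degree_eq' n := by
    rw [degree_eq_natDegree (monic_descPochhammer R n).ne_zero, descPochhammer_natDegree]

noncomputable def Polynomial.descPochhammerBasis : Module.Basis ℕ R R[X] :=
  (descPochhammerSequence R).basis fun n => by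
    simp [descPochhammerSequence, (monic_descPochhammer R n).leadingCoeff]

@[simp]
theorem Polynomial.descPochhammerBasis_apply (n : ℕ) :
    descPochhammerBasis R n = descPochhammer R n :=
  Sequence.basis_eq_self _ _ _

theorem Polynomial.descPochhammerBasis_repr_descPochhammer_mul_X_sub_pow (p j k : ℕ) :
    (descPochhammerBasis R).repr (descPochhammer R p * (X - (p : R[X])) ^ j) k =
      if p ≤ k then (j.stirlingSecond (k - p) : R) else 0 := by
  have expand : descPochhammer R p * (X - (p : R[X])) ^ j
      = ∑ m ∈ range (j + 1), j.stirlingSecond m • descPochhammerBasis R (p + m) := by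
    rw [← X_pow_comp, X_pow_eq_sum_stirlingSecond_smul_descPochhammer, sum_comp, mul_sum]
    refine sum_congr rfl fun m _ => ?_
    rw [nsmul_eq_mul, mul_comp, natCast_comp, mul_left_comm, descPochhammer_mul, nsmul_eq_mul,
      descPochhammerBasis_apply]
  simp only [expand, map_sum, map_nsmul, Module.Basis.repr_self, Finsupp.coe_finsetSum,
    Finset.sum_apply, Finsupp.smul_apply, Finsupp.single_apply, smul_ite, nsmul_one, smul_zero]
  split_ifs with hpk
  · obtain ⟨m, rfl⟩ := Nat.exists_eq_add_of_le hpk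
    simp only [add_right_inj, sum_ite_eq', mem_range, Nat.add_sub_cancel_left]
    split_ifs with hm
    · rfl
    · rw [Nat.stirlingSecond_eq_zero_of_lt (by omega), Nat.cast_zero]
  · exact sum_eq_zero fun m _ => if_neg (by omega)

theorem Polynomial.descPochhammerBasis_repr_X_pow (n k : ℕ) :
    (descPochhammerBasis R).repr (X ^ n) k = n.stirlingSecond k := by
  simpa using descPochhammerBasis_repr_descPochhammer_mul_X_sub_pow R 0 n k

end Basis

theorem alternating_sum_stirlingFirst_mul_stirlingSecond (p1 p2 l : ℕ) :
    ∑ k ∈ range (p2 + 1), (-1 : ℤ) ^ (p2 + k) * p2.stirlingFirst k * (p1 + k).stirlingSecond l =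
      ∑ j ∈ range (p1 + 1), (p1.choose j : ℤ) * p2 ^ (p1 - j) *
        if p2 ≤ l then (j.stirlingSecond (l - p2) : ℤ) else 0 := by
  have via_powers : X ^ p1 * descPochhammer ℤ p2 =
      ∑ k ∈ range (p2 + 1), ((-1 : ℤ) ^ (p2 + k) * p2.stirlingFirst k) • X ^ (p1 + k) := by
    conv_lhs => rw [as_sum_range_C_mul_X_pow (descPochhammer ℤ p2), descPochhammer_natDegree]
    rw [mul_sum]
    refine sum_congr rfl fun k _ => ?_
    rw [coeff_descPochhammer, C_mul', mul_smul_comm, ← pow_add]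
  have via_shift : X ^ p1 * descPochhammer ℤ p2 = ∑ j ∈ range (p1 + 1),
      ((p1.choose j : ℤ) * p2 ^ (p1 - j)) • (descPochhammer ℤ p2 * (X - (p2 : ℤ[X])) ^ j) := by
    conv_lhs => rw [← sub_add_cancel X (p2 : ℤ[X]), add_pow, sum_mul]
    refine sum_congr rfl fun j _ => ?_
    rw [← C_mul', C_mul, C_pow, C_eq_natCast, C_eq_natCast]
    ring
  have := congrArg (fun q => (descPochhammerBasis ℤ).repr q l) (via_powers.symm.trans via_shift)
  simpa only [map_sum, map_smul, Finsupp.coe_finsetSum, Finset.sum_apply, Finsupp.smul_apply,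
    smul_eq_mul, descPochhammerBasis_repr_X_pow,
    descPochhammerBasis_repr_descPochhammer_mul_X_sub_pow] using this

theorem stmt13_general (p1 p2 l : ℕ) :
    (stirling2 (p1 + p2) l : ℤ) =
      (∑ k ∈ Finset.Icc 1 (p2 - 1),
          (-1 : ℤ) ^ (p2 + 1 + k) * (stirling1 p2 k : ℤ) * (stirling2 (p1 + k) l : ℤ)) +
        ∑ j ∈ range (p1 + 1),
          (p1.choose j : ℤ) * (p2 : ℤ) ^ (p1 - j) * stirling2Z j ((l : ℤ) - p2) := by
  have key := alternating_sum_stirlingFirst_mul_stirlingSecond p1 p2 l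
  simp only [← stirling2Z_sub] at key
  rw [← key, stirling1_eq_stirlingFirst, stirling2_eq_stirlingSecond]
  cases p2 with
  | zero => simp
  | succ q =>
    have sign (k : ℕ) : (-1 : ℤ) ^ (q + 1 + 1 + k) = -(-1) ^ (q + 1 + k) := by ring
    rw [range_eq_Ico, sum_eq_sum_Ico_succ_bot (by omega), sum_Ico_succ_top (by omega),
      Ico_add_one_right_eq_Icc, Nat.add_sub_cancel, Nat.stirlingFirst_succ_zero,
      Nat.stirlingFirst_self, (Even.add_self (q + 1)).neg_one_pow]
    simp only [sign, neg_mul, sum_neg_distrib]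
    push_cast
    ring

theorem stmt13 (p1 p2 l : ℕ) (hp2 : 0 < p2) :
    (stirling2 (p1 + p2) l : ℤ) =
      (∑ k ∈ Finset.Icc 1 (p2 - 1),
          (-1 : ℤ) ^ (p2 + 1 + k) * (stirling1 p2 k : ℤ) * (stirling2 (p1 + k) l : ℤ)) +
        ∑ j ∈ range (p1 + 1),
          (p1.choose j : ℤ) * (p2 : ℤ) ^ (p1 - j) * stirling2Z j ((l : ℤ) - p2) :=
  stmt13_general p1 p2 l
end

section
/- For complex a1,b1,a2,b2 and nonnegative integers p2,q1,q2,l: S_{a1,b1}^{a2,b2,q1+q2}(p2, l) = Σ_{m=0}^{p2+q2} S_{a1,b1}^{a2,b2,q2}(p2, m) · S_{a2, a2·m + b2}(q1, l−m), where S_{a,b}(q,k) = S_{a,b}^{a2,b2,0}(q,k) is the one-parameter generalized Stirling number and S-values with negative second argument are 0. -/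
/-!
`gsn a1 b1 a2 b2 p1 p2 k` is `Δᵏ f 0 / k!` for `f x = (a1 x + b1)^p1 (a2 x + b2)^p2`, `Δ` the
forward difference with step 1. Split `f` for the exponents `(p2, q1 + q2)` as `F * G` with
`F x = (a1 x + b1)^p2 (a2 x + b2)^q2` and `G x = (a2 x + b2)^q1`. The Leibniz rule
`Δˡ (F G) 0 = ∑ₘ C(l, m) Δᵐ F 0 · Δˡ⁻ᵐ G m` turns the left side into a convolution, and
`G (x + m) = (a2 x + (a2 m + b2))^q1` produces the shifted parameter. Since `F` is a polynomial of
degree at most `p2 + q2`, `Δᵐ F = 0` for larger `m`, so the sum may run over `m ≤ p2 + q2`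
instead of `m ≤ l`.
-/

open Finset

open fwdDiff
open scoped Nat

theorem fwdDiff_iter_mul {M R : Type*} [AddCommMonoid M] [Ring R] (h : M) (f g : M → R)
    (n : ℕ) (y : M) :
    Δ_[h] ^[n] (f * g) y =
      ∑ k ∈ range (n + 1), n.choose k • (Δ_[h] ^[k] f y * Δ_[h] ^[n - k] g (y + k • h)) := by
  induction n generalizing f g with
  | zero => simp
  | succ n ih =>
    have hstep : Δ_[h] (f * g) = Δ_[h] f * (fun x ↦ g (x + h)) + f * Δ_[h] g := by
      ext x; simp only [fwdDiff, Pi.mul_apply, Pi.add_apply]; noncomm_ring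
    rw [Function.iterate_succ_apply, hstep, fwdDiff_iter_add, Pi.add_apply, ih, ih,
      sum_choose_succ_nsmul (fun i j ↦ Δ_[h] ^[i] f y * Δ_[h] ^[j] g (y + i • h)), add_comm]
    congr 1
    · refine sum_congr rfl fun k hk ↦ ?_
      rw [← Function.iterate_succ_apply, Nat.sub_add_comm (Nat.lt_succ_iff.mp (mem_range.mp hk))]
    · refine sum_congr rfl fun k _ ↦ ?_
      rw [← Function.iterate_succ_apply, fwdDiff_iter_comp_add, succ_nsmul, add_assoc]

theorem Finset.sum_range_eq_of_eq_zero {M : Type*} [AddCommMonoid M] {f : ℕ → M} {a b : ℕ}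
    (ha : ∀ m, a ≤ m → f m = 0) (hb : ∀ m, b ≤ m → f m = 0) :
    ∑ m ∈ range a, f m = ∑ m ∈ range b, f m := by
  wlog hab : a ≤ b generalizing a b
  · exact (this hb ha (by omega)).symm
  exact sum_subset (range_mono hab) fun m _ hm ↦ ha m (by simpa using hm)

theorem gsn_eq_fwdDiff_iter (a1 b1 a2 b2 : ℂ) (p1 p2 k : ℕ) :
    gsn a1 b1 a2 b2 p1 p2 k =
      Δ_[1] ^[k] (fun x : ℂ ↦ (a1 * x + b1) ^ p1 * (a2 * x + b2) ^ p2) 0 / k ! := by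
  rw [gsn, fwdDiff_iter_eq_sum_shift, one_div_mul_eq_div, ← sum_range_reflect]
  congr 1
  refine sum_congr rfl fun j hj ↦ ?_
  have hjk : j ≤ k := Nat.lt_succ_iff.mp (mem_range.mp hj)
  rw [add_tsub_cancel_right, Nat.choose_symm hjk]
  simp only [zsmul_eq_mul, nsmul_eq_mul, mul_one, zero_add]
  push_cast [Nat.cast_sub hjk]
  ring

open Polynomial in
theorem gsn_eq_zero_of_lt {a1 b1 a2 b2 : ℂ} {p1 p2 k : ℕ} (hk : p1 + p2 < k) :
    gsn a1 b1 a2 b2 p1 p2 k = 0 := by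
  have hpoly : (fun x : ℂ ↦ (a1 * x + b1) ^ p1 * (a2 * x + b2) ^ p2) =
      ((C a1 * X + C b1) ^ p1 * (C a2 * X + C b2) ^ p2).eval := by
    ext x; simp
  have hdeg : ((C a1 * X + C b1) ^ p1 * (C a2 * X + C b2) ^ p2).natDegree < k := by
    refine (natDegree_mul_le.trans (add_le_add ?_ ?_)).trans_lt hk <;>
      exact (natDegree_pow_le_of_le _ natDegree_linear_le).trans_eq (mul_one _)
  rw [gsn_eq_fwdDiff_iter, hpoly, fwdDiff_iter_eq_zero_of_degree_lt hdeg]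
  simp

theorem gsn_shift_eq_fwdDiff_iter (a b : ℂ) (q m n : ℕ) :
    gsn a (a * m + b) 0 0 q 0 n = Δ_[1] ^[n] (fun x : ℂ ↦ (a * x + b) ^ q) m / n ! := by
  have hshift : (fun x : ℂ ↦ (a * x + (a * m + b)) ^ q * (0 * x + 0) ^ 0) =
      fun x ↦ (a * (x + m) + b) ^ q := by
    funext x; ring
  rw [gsn_eq_fwdDiff_iter, hshift, fwdDiff_iter_comp_add (f := fun x : ℂ ↦ (a * x + b) ^ q),
    zero_add]

theorem gsn_pow_add_eq_sum (a1 b1 a2 b2 : ℂ) (p q1 q2 l : ℕ) :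
    gsn a1 b1 a2 b2 p (q1 + q2) l =
      ∑ m ∈ range (l + 1), gsn a1 b1 a2 b2 p q2 m * gsn a2 (a2 * m + b2) 0 0 q1 0 (l - m) := by
  have hsplit : (fun x : ℂ ↦ (a1 * x + b1) ^ p * (a2 * x + b2) ^ (q1 + q2)) =
      (fun x ↦ (a1 * x + b1) ^ p * (a2 * x + b2) ^ q2) * fun x ↦ (a2 * x + b2) ^ q1 := by
    ext x; simp only [Pi.mul_apply]; ring
  rw [gsn_eq_fwdDiff_iter, hsplit, fwdDiff_iter_mul, sum_div]
  refine sum_congr rfl fun m hm ↦ ?_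
  have hml : m ≤ l := Nat.lt_succ_iff.mp (mem_range.mp hm)
  have hcoeff : ∀ A B : ℂ, (l.choose m : ℂ) * (A * B) / l ! = A / m ! * (B / (l - m)!) := by
    intro A B
    have hfac : (l ! : ℂ) ≠ 0 := Nat.cast_ne_zero.mpr l.factorial_ne_zero
    rw [Nat.cast_choose ℂ hml]
    field_simp
  rw [gsn_eq_fwdDiff_iter, gsn_shift_eq_fwdDiff_iter, zero_add, nsmul_one, nsmul_eq_mul, hcoeff]

theorem gsnZ_natCast_sub_of_le {a1 b1 a2 b2 : ℂ} {p1 p2 l m : ℕ} (h : m ≤ l) :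
    gsnZ a1 b1 a2 b2 p1 p2 ((l : ℤ) - m) = gsn a1 b1 a2 b2 p1 p2 (l - m) := by
  rw [gsnZ, if_neg (by omega)]
  congr
  omega

theorem gsnZ_natCast_sub_of_lt {a1 b1 a2 b2 : ℂ} {p1 p2 l m : ℕ} (h : l < m) :
    gsnZ a1 b1 a2 b2 p1 p2 ((l : ℤ) - m) = 0 :=
  if_pos (by omega)

theorem stmt14 (a1 b1 a2 b2 : ℂ) (p2 q1 q2 l : ℕ) :
    gsn a1 b1 a2 b2 p2 (q1 + q2) l =
      ∑ m ∈ range (p2 + q2 + 1),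
        gsn a1 b1 a2 b2 p2 q2 m * gsnZ a2 (a2 * m + b2) 0 0 q1 0 ((l : ℤ) - m) := by
  rw [gsn_pow_add_eq_sum]
  calc _ = ∑ m ∈ range (l + 1),
        gsn a1 b1 a2 b2 p2 q2 m * gsnZ a2 (a2 * m + b2) 0 0 q1 0 ((l : ℤ) - m) :=
        sum_congr rfl fun m hm ↦ by
          rw [gsnZ_natCast_sub_of_le (Nat.lt_succ_iff.mp (mem_range.mp hm))]
    _ = _ := sum_range_eq_of_eq_zero
        (fun m hm ↦ by rw [gsnZ_natCast_sub_of_lt hm, mul_zero])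
        (fun m hm ↦ by rw [gsn_eq_zero_of_lt hm, zero_mul])
end
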